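/- There exists an edge 2-colored weighted multigraph on 4 vertices with colors {red, green} such that the colorings (g,r,r,r), (r,g,r,r), (r,r,g,r), (r,r,r,g) have weights 1, 1, 2, i respectively, and every other vertex coloring has weight 0. -/

import Mathlib

open scoped Classical

/-- An edge bi-colored weighted (multi)graph on `n` vertices with `d` colors:
each edge has two (possibly equal) endpoints, a complex weight, and an ordered
pair of colors, one at each endpoint. -/
structure BCGraph (n d : ℕ) where
  E : Type
  [fintypeE : Fintype E]
  [deqE : DecidableEq E]
  fst : E → Fin n
  snd : E → Fin n
  ne : ∀ e, fst e ≠ snd e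
  w : E → ℂ
  c1 : E → Fin d
  c2 : E → Fin d

attribute [instance] BCGraph.fintypeE BCGraph.deqE

namespace BCGraph

variable {n d : ℕ} (G : BCGraph n d)

/-- The edge `e` is incident to the vertex `v`. -/
def inc (e : G.E) (v : Fin n) : Prop := G.fst e = v ∨ G.snd e = v

/-- The color of the edge `e` at the vertex `v` (meaningful when `e` is incident to `v`). -/
def colorAt (e : G.E) (v : Fin n) : Fin d := if G.fst e = v then G.c1 e else G.c2 e

/-- A set of edges is a perfect matching if every vertex is incident to exactly
one edge of the set. -/
def IsPM (M : Finset G.E) : Prop :=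
  ∀ v : Fin n, ∃ e ∈ M, G.inc e v ∧ ∀ e' ∈ M, G.inc e' v → e' = e

/-- The finite set of all perfect matchings of `G`. -/
noncomputable def PMs : Finset (Finset G.E) := Finset.univ.filter (fun M => G.IsPM M)

/-- `c` is the inherited vertex coloring of the perfect matching `M`: every vertex
receives the color, at that vertex, of an incident matching edge. -/
def IsIVC (M : Finset G.E) (c : Fin n → Fin d) : Prop :=
  ∀ v : Fin n, ∃ e ∈ M, G.inc e v ∧ G.colorAt e v = c v

/-- The weight of a set of edges: the product of the edge weights. -/
def wt (M : Finset G.E) : ℂ := ∏ e ∈ M, G.w e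

/-- The weight `w(c)` of a vertex coloring `c`: the sum, over all perfect matchings
whose inherited vertex coloring is `c`, of the products of the edge weights. -/
noncomputable def wcol (c : Fin n → Fin d) : ℂ :=
  ∑ M ∈ G.PMs.filter (fun M => G.IsIVC M c), G.wt M

/-- A vertex coloring is monochromatic if all vertices get the same color. -/
def IsMonoColoring (c : Fin n → Fin d) : Prop := ∃ k : Fin d, c = fun _ => k

/-- A bi-colored graph is monochromatic if all `d` monochromatic colorings have
unit weight and every other coloring cancels out. -/
noncomputable def IsMonoGraph : Prop :=
  (∀ k : Fin d, G.wcol (fun _ => k) = 1) ∧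
  ∀ c : Fin n → Fin d, ¬ IsMonoColoring c → G.wcol c = 0

/-- `N = Σ_c |w(c)|²`. -/
noncomputable def Nval : ℝ := ∑ c : Fin n → Fin d, norm (G.wcol c) ^ 2

/-- Monochromatic fidelity `F^mono = (1/d)(1/N)|Σ_{c ∈ C^mono} w(c)|²`. -/
noncomputable def Fmono : ℝ :=
  (1 / (d : ℝ)) * (1 / G.Nval) *
    norm (∑ c ∈ Finset.univ.filter (fun c : Fin n → Fin d => IsMonoColoring c),
      G.wcol c) ^ 2

/-- The `k`-monochromatic coloring of `n` vertices in color `x`: the first `k`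
vertices get `x`, the remaining ones are red (color `0`). -/
def kMonoColoring (n : ℕ) {d : ℕ} [NeZero d] (k : ℕ) (x : Fin d) : Fin n → Fin d :=
  fun i => if (i : ℕ) < k then x else 0

/-- A bi-colored graph is `k`-monochromatic if all `d` `k`-monochromatic colorings
have unit weight and every other coloring cancels out. -/
noncomputable def IsKMonoGraph [NeZero d] (k : ℕ) : Prop :=
  (∀ x : Fin d, G.wcol (kMonoColoring n k x) = 1) ∧
  ∀ c : Fin n → Fin d, (∀ x : Fin d, c ≠ kMonoColoring n k x) → G.wcol c = 0

/-- `k`-monochromatic fidelity `F^{k-mono} = (1/d)(1/N)|Σ_{c ∈ C^{k-mono}} w(c)|²`. -/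
noncomputable def Fkmono [NeZero d] (k : ℕ) : ℝ :=
  (1 / (d : ℝ)) * (1 / G.Nval) *
    norm (∑ c ∈ Finset.univ.filter
      (fun c : Fin n → Fin d => ∃ x : Fin d, c = kMonoColoring n k x), G.wcol c) ^ 2

/-- General fidelity `F^general = (1/(N₁N₂))|Σ_i conj(wᵢ)·w(Cᵢ)|²` for prescribed
colorings `C` and weights `wts`. -/
noncomputable def Fgeneral {t : ℕ} (C : Fin t → (Fin n → Fin d)) (wts : Fin t → ℂ) : ℝ :=
  (1 / ((∑ i, norm (wts i) ^ 2) * G.Nval)) *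
    norm (∑ i, (starRingEnd ℂ) (wts i) * G.wcol (C i)) ^ 2

end BCGraph

/-! ### Construction for Statement 10 -/

/-- The explicit graph: 10 edges on 4 vertices.
Edges 0,1,2 join vertices 0-1; edge 3 joins 2-3; edges 4,5 join 0-2;
edges 6,7 join 1-3; edge 8 joins 0-3; edge 9 joins 1-2. -/
@[reducible] noncomputable def Gw : BCGraph 4 2 where
  E := Fin 10
  fst := ![0,0,0,2,0,0,1,1,0,1]
  snd := ![1,1,1,3,2,2,3,3,3,2]
  ne := by decide
  w := fun e => if e.val = 2 then -1 else if e.val = 5 then 2 else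
    if e.val = 7 then Complex.I else if e.val = 8 then -2*Complex.I else 1
  c1 := ![1,0,0,0,0,0,0,0,0,0]
  c2 := ![0,1,0,0,0,1,0,1,1,1]

/-- The eight perfect matchings of `Gw`. -/
def Sm : Finset (Finset (Fin 10)) := {{0,3},{1,3},{2,3},{4,6},{5,6},{4,7},{5,7},{8,9}}

section NoClassical
attribute [-instance] Classical.propDecidable

set_option maxRecDepth 10000 in
set_option maxHeartbeats 2000000 in
set_option synthInstance.maxHeartbeats 1000000 in
set_option synthInstance.maxSize 2000 in
lemma quad_key : ∀ a b c d : Fin 10,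
    Gw.inc a 0 → Gw.inc b 1 → Gw.inc c 2 → Gw.inc d 3 →
    (Gw.inc b 0 → b = a) → (Gw.inc c 0 → c = a) → (Gw.inc d 0 → d = a) →
    (Gw.inc a 1 → a = b) → (Gw.inc c 1 → c = b) → (Gw.inc d 1 → d = b) →
    (Gw.inc a 2 → a = c) → (Gw.inc b 2 → b = c) → (Gw.inc d 2 → d = c) →
    (Gw.inc a 3 → a = d) → (Gw.inc b 3 → b = d) → (Gw.inc c 3 → c = d) →
    (a = 0 ∧ b = 0 ∧ c = 3 ∧ d = 3) ∨ (a = 1 ∧ b = 1 ∧ c = 3 ∧ d = 3) ∨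
    (a = 2 ∧ b = 2 ∧ c = 3 ∧ d = 3) ∨ (a = 4 ∧ b = 6 ∧ c = 4 ∧ d = 6) ∨
    (a = 5 ∧ b = 6 ∧ c = 5 ∧ d = 6) ∨ (a = 4 ∧ b = 7 ∧ c = 4 ∧ d = 7) ∨
    (a = 5 ∧ b = 7 ∧ c = 5 ∧ d = 7) ∨ (a = 8 ∧ b = 9 ∧ c = 9 ∧ d = 8) := by
  simp only [BCGraph.inc, Gw]
  simp only [imp_iff_not_or]
  decide

set_option maxRecDepth 4000 in
lemma pm1 : Gw.IsPM ({0,3} : Finset (Fin 10)) := by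
  simp only [BCGraph.IsPM, BCGraph.inc, Gw]
  simp only [imp_iff_not_or]
  decide

set_option maxRecDepth 4000 in
lemma pm2 : Gw.IsPM ({1,3} : Finset (Fin 10)) := by
  simp only [BCGraph.IsPM, BCGraph.inc, Gw]
  simp only [imp_iff_not_or]
  decide

set_option maxRecDepth 4000 in
lemma pm3 : Gw.IsPM ({2,3} : Finset (Fin 10)) := by
  simp only [BCGraph.IsPM, BCGraph.inc, Gw]
  simp only [imp_iff_not_or]
  decide

set_option maxRecDepth 4000 in
lemma pm4 : Gw.IsPM ({4,6} : Finset (Fin 10)) := by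
  simp only [BCGraph.IsPM, BCGraph.inc, Gw]
  simp only [imp_iff_not_or]
  decide

set_option maxRecDepth 4000 in
lemma pm5 : Gw.IsPM ({5,6} : Finset (Fin 10)) := by
  simp only [BCGraph.IsPM, BCGraph.inc, Gw]
  simp only [imp_iff_not_or]
  decide

set_option maxRecDepth 4000 in
lemma pm6 : Gw.IsPM ({4,7} : Finset (Fin 10)) := by
  simp only [BCGraph.IsPM, BCGraph.inc, Gw]
  simp only [imp_iff_not_or]
  decide

set_option maxRecDepth 4000 in
lemma pm7 : Gw.IsPM ({5,7} : Finset (Fin 10)) := by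
  simp only [BCGraph.IsPM, BCGraph.inc, Gw]
  simp only [imp_iff_not_or]
  decide

set_option maxRecDepth 4000 in
lemma pm8 : Gw.IsPM ({8,9} : Finset (Fin 10)) := by
  simp only [BCGraph.IsPM, BCGraph.inc, Gw]
  simp only [imp_iff_not_or]
  decide

lemma pm_of_mem : ∀ M ∈ Sm, Gw.IsPM M := by
  intro M hM
  simp only [Sm, Finset.mem_insert, Finset.mem_singleton] at hM
  rcases hM with rfl | rfl | rfl | rfl | rfl | rfl | rfl | rfl
  exacts [pm1, pm2, pm3, pm4, pm5, pm6, pm7, pm8]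

lemma fst_cases (e : Gw.E) :
    Gw.fst e = 0 ∨ Gw.fst e = 1 ∨ Gw.fst e = 2 ∨ Gw.fst e = 3 := by
  generalize Gw.fst e = v
  revert v; decide

lemma mem_of_pm (M : Finset Gw.E) (h : Gw.IsPM M) : M ∈ Sm := by
  obtain ⟨a, ha, hainc, hauniq⟩ := h 0
  obtain ⟨b, hb, hbinc, hbuniq⟩ := h 1
  obtain ⟨c, hc, hcinc, hcuniq⟩ := h 2
  obtain ⟨d, hd, hdinc, hduniq⟩ := h 3
  have hsub : ∀ e ∈ M, e = a ∨ e = b ∨ e = c ∨ e = d := by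
    intro e he
    rcases fst_cases e with h4 | h4 | h4 | h4
    · exact Or.inl (hauniq e he (Or.inl h4))
    · exact Or.inr (Or.inl (hbuniq e he (Or.inl h4)))
    · exact Or.inr (Or.inr (Or.inl (hcuniq e he (Or.inl h4))))
    · exact Or.inr (Or.inr (Or.inr (hduniq e he (Or.inl h4))))
  have hM : M = {a, b, c, d} := by
    apply Finset.ext; intro e
    simp only [Finset.mem_insert, Finset.mem_singleton]
    constructor
    · exact fun he => hsub e he
    · rintro (rfl | rfl | rfl | rfl) <;> assumption
  have key := quad_key a b c d hainc hbinc hcinc hdinc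
    (fun h' => hauniq b hb h') (fun h' => hauniq c hc h') (fun h' => hauniq d hd h')
    (fun h' => hbuniq a ha h') (fun h' => hbuniq c hc h') (fun h' => hbuniq d hd h')
    (fun h' => hcuniq a ha h') (fun h' => hcuniq b hb h') (fun h' => hcuniq d hd h')
    (fun h' => hduniq a ha h') (fun h' => hduniq b hb h') (fun h' => hduniq c hc h')
  rw [hM]
  rcases key with ⟨rfl, rfl, rfl, rfl⟩ | ⟨rfl, rfl, rfl, rfl⟩ | ⟨rfl, rfl, rfl, rfl⟩ |
    ⟨rfl, rfl, rfl, rfl⟩ | ⟨rfl, rfl, rfl, rfl⟩ | ⟨rfl, rfl, rfl, rfl⟩ |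
    ⟨rfl, rfl, rfl, rfl⟩ | ⟨rfl, rfl, rfl, rfl⟩ <;> decide

lemma pms_eq : Gw.PMs = Sm := by
  apply Finset.ext; intro M
  simp only [BCGraph.PMs, Finset.mem_filter, Finset.mem_univ, true_and]
  exact ⟨fun h => mem_of_pm M h, fun h => pm_of_mem M h⟩

set_option maxRecDepth 10000 in
set_option maxHeartbeats 2000000 in
set_option synthInstance.maxHeartbeats 1000000 in
set_option synthInstance.maxSize 2000 in
lemma ivc_iff : ∀ c : Fin 4 → Fin 2,
    (Gw.IsIVC ({0,3} : Finset (Fin 10)) c ↔ c = ![1,0,0,0]) ∧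
    (Gw.IsIVC ({1,3} : Finset (Fin 10)) c ↔ c = ![0,1,0,0]) ∧
    (Gw.IsIVC ({2,3} : Finset (Fin 10)) c ↔ c = ![0,0,0,0]) ∧
    (Gw.IsIVC ({4,6} : Finset (Fin 10)) c ↔ c = ![0,0,0,0]) ∧
    (Gw.IsIVC ({5,6} : Finset (Fin 10)) c ↔ c = ![0,0,1,0]) ∧
    (Gw.IsIVC ({4,7} : Finset (Fin 10)) c ↔ c = ![0,0,0,1]) ∧
    (Gw.IsIVC ({5,7} : Finset (Fin 10)) c ↔ c = ![0,0,1,1]) ∧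
    (Gw.IsIVC ({8,9} : Finset (Fin 10)) c ↔ c = ![0,0,1,1]) := by
  simp only [BCGraph.IsIVC, BCGraph.inc, BCGraph.colorAt, Gw]
  decide

lemma wt_pair (a b : Gw.E) (h : ¬ a = b) : Gw.wt {a,b} = Gw.w a * Gw.w b := by
  rw [BCGraph.wt, Finset.prod_pair h]

lemma w_0 : Gw.w (0 : Fin 10) = 1 := rfl
lemma w_1 : Gw.w (1 : Fin 10) = 1 := rfl
lemma w_2 : Gw.w (2 : Fin 10) = -1 := rfl
lemma w_3 : Gw.w (3 : Fin 10) = 1 := rfl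
lemma w_4 : Gw.w (4 : Fin 10) = 1 := rfl
lemma w_5 : Gw.w (5 : Fin 10) = 2 := rfl
lemma w_6 : Gw.w (6 : Fin 10) = 1 := rfl
lemma w_7 : Gw.w (7 : Fin 10) = Complex.I := rfl
lemma w_8 : Gw.w (8 : Fin 10) = -2*Complex.I := rfl
lemma w_9 : Gw.w (9 : Fin 10) = 1 := rfl

lemma wt_vals :
    Gw.wt ({0,3} : Finset (Fin 10)) = 1 ∧
    Gw.wt ({1,3} : Finset (Fin 10)) = 1 ∧
    Gw.wt ({2,3} : Finset (Fin 10)) = -1 ∧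
    Gw.wt ({4,6} : Finset (Fin 10)) = 1 ∧
    Gw.wt ({5,6} : Finset (Fin 10)) = 2 ∧
    Gw.wt ({4,7} : Finset (Fin 10)) = Complex.I ∧
    Gw.wt ({5,7} : Finset (Fin 10)) = 2*Complex.I ∧
    Gw.wt ({8,9} : Finset (Fin 10)) = -2*Complex.I := by
  refine ⟨?_, ?_, ?_, ?_, ?_, ?_, ?_, ?_⟩
  · rw [wt_pair (0:Fin 10) (3:Fin 10) (by decide), w_0, w_3]; try ring
  · rw [wt_pair (1:Fin 10) (3:Fin 10) (by decide), w_1, w_3]; try ring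
  · rw [wt_pair (2:Fin 10) (3:Fin 10) (by decide), w_2, w_3]; try ring
  · rw [wt_pair (4:Fin 10) (6:Fin 10) (by decide), w_4, w_6]; try ring
  · rw [wt_pair (5:Fin 10) (6:Fin 10) (by decide), w_5, w_6]; try ring
  · rw [wt_pair (4:Fin 10) (7:Fin 10) (by decide), w_4, w_7]; try ring
  · rw [wt_pair (5:Fin 10) (7:Fin 10) (by decide), w_5, w_7]; try ring
  · rw [wt_pair (8:Fin 10) (9:Fin 10) (by decide), w_8, w_9]; try ring

lemma nm1 : ({0,3} : Finset (Fin 10)) ∉ ({{1,3},{2,3},{4,6},{5,6},{4,7},{5,7},{8,9}} : Finset (Finset (Fin 10))) := by decide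
lemma nm2 : ({1,3} : Finset (Fin 10)) ∉ ({{2,3},{4,6},{5,6},{4,7},{5,7},{8,9}} : Finset (Finset (Fin 10))) := by decide
lemma nm3 : ({2,3} : Finset (Fin 10)) ∉ ({{4,6},{5,6},{4,7},{5,7},{8,9}} : Finset (Finset (Fin 10))) := by decide
lemma nm4 : ({4,6} : Finset (Fin 10)) ∉ ({{5,6},{4,7},{5,7},{8,9}} : Finset (Finset (Fin 10))) := by decide
lemma nm5 : ({5,6} : Finset (Fin 10)) ∉ ({{4,7},{5,7},{8,9}} : Finset (Finset (Fin 10))) := by decide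
lemma nm6 : ({4,7} : Finset (Fin 10)) ∉ ({{5,7},{8,9}} : Finset (Finset (Fin 10))) := by decide
lemma nm7 : ({5,7} : Finset (Fin 10)) ∉ ({{8,9}} : Finset (Finset (Fin 10))) := by decide

lemma neAB : ¬((![1,0,0,0] : Fin 4 → Fin 2) = ![0,1,0,0]) := by decide
lemma neAC : ¬((![1,0,0,0] : Fin 4 → Fin 2) = ![0,0,1,0]) := by decide
lemma neAD : ¬((![1,0,0,0] : Fin 4 → Fin 2) = ![0,0,0,1]) := by decide
lemma neBA : ¬((![0,1,0,0] : Fin 4 → Fin 2) = ![1,0,0,0]) := by decide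
lemma neBC : ¬((![0,1,0,0] : Fin 4 → Fin 2) = ![0,0,1,0]) := by decide
lemma neBD : ¬((![0,1,0,0] : Fin 4 → Fin 2) = ![0,0,0,1]) := by decide
lemma neCA : ¬((![0,0,1,0] : Fin 4 → Fin 2) = ![1,0,0,0]) := by decide
lemma neCB : ¬((![0,0,1,0] : Fin 4 → Fin 2) = ![0,1,0,0]) := by decide
lemma neCD : ¬((![0,0,1,0] : Fin 4 → Fin 2) = ![0,0,0,1]) := by decide
lemma neDA : ¬((![0,0,0,1] : Fin 4 → Fin 2) = ![1,0,0,0]) := by decide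
lemma neDB : ¬((![0,0,0,1] : Fin 4 → Fin 2) = ![0,1,0,0]) := by decide
lemma neDC : ¬((![0,0,0,1] : Fin 4 → Fin 2) = ![0,0,1,0]) := by decide

end NoClassical

lemma wcol_formula (c : Fin 4 → Fin 2) :
    Gw.wcol c = (if c = ![1,0,0,0] then 1 else 0) + (if c = ![0,1,0,0] then 1 else 0)
      + (if c = ![0,0,1,0] then 2 else 0) + (if c = ![0,0,0,1] then Complex.I else 0) := by
  obtain ⟨w1, w2, w3, w4, w5, w6, w7, w8⟩ := wt_vals
  obtain ⟨i1, i2, i3, i4, i5, i6, i7, i8⟩ := ivc_iff c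
  rw [BCGraph.wcol, pms_eq, Finset.sum_filter]
  rw [show Sm = {{0,3},{1,3},{2,3},{4,6},{5,6},{4,7},{5,7},{8,9}} from rfl]
  rw [Finset.sum_insert nm1, Finset.sum_insert nm2, Finset.sum_insert nm3,
    Finset.sum_insert nm4, Finset.sum_insert nm5, Finset.sum_insert nm6,
    Finset.sum_insert nm7, Finset.sum_singleton]
  simp only [i1, i2, i3, i4, i5, i6, i7, i8, w1, w2, w3, w4, w5, w6, w7, w8]
  by_cases hA : c = (![1,0,0,0] : Fin 4 → Fin 2)
  · have nB : c ≠ (![0,1,0,0] : Fin 4 → Fin 2) := by rw [hA]; decide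
    have nZ : c ≠ (![0,0,0,0] : Fin 4 → Fin 2) := by rw [hA]; decide
    have nC : c ≠ (![0,0,1,0] : Fin 4 → Fin 2) := by rw [hA]; decide
    have nD : c ≠ (![0,0,0,1] : Fin 4 → Fin 2) := by rw [hA]; decide
    have nG : c ≠ (![0,0,1,1] : Fin 4 → Fin 2) := by rw [hA]; decide
    simp only [if_pos hA, if_neg nB, if_neg nZ, if_neg nC, if_neg nD, if_neg nG]
    ring
  by_cases hB : c = (![0,1,0,0] : Fin 4 → Fin 2)
  · have nA : c ≠ (![1,0,0,0] : Fin 4 → Fin 2) := by rw [hB]; decide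
    have nZ : c ≠ (![0,0,0,0] : Fin 4 → Fin 2) := by rw [hB]; decide
    have nC : c ≠ (![0,0,1,0] : Fin 4 → Fin 2) := by rw [hB]; decide
    have nD : c ≠ (![0,0,0,1] : Fin 4 → Fin 2) := by rw [hB]; decide
    have nG : c ≠ (![0,0,1,1] : Fin 4 → Fin 2) := by rw [hB]; decide
    simp only [if_pos hB, if_neg nA, if_neg nZ, if_neg nC, if_neg nD, if_neg nG]
    ring
  by_cases hZ : c = (![0,0,0,0] : Fin 4 → Fin 2)
  · have nA : c ≠ (![1,0,0,0] : Fin 4 → Fin 2) := by rw [hZ]; decide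
    have nB : c ≠ (![0,1,0,0] : Fin 4 → Fin 2) := by rw [hZ]; decide
    have nC : c ≠ (![0,0,1,0] : Fin 4 → Fin 2) := by rw [hZ]; decide
    have nD : c ≠ (![0,0,0,1] : Fin 4 → Fin 2) := by rw [hZ]; decide
    have nG : c ≠ (![0,0,1,1] : Fin 4 → Fin 2) := by rw [hZ]; decide
    simp only [if_pos hZ, if_neg nA, if_neg nB, if_neg nC, if_neg nD, if_neg nG]
    ring
  by_cases hC : c = (![0,0,1,0] : Fin 4 → Fin 2)
  · have nA : c ≠ (![1,0,0,0] : Fin 4 → Fin 2) := by rw [hC]; decide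
    have nB : c ≠ (![0,1,0,0] : Fin 4 → Fin 2) := by rw [hC]; decide
    have nZ : c ≠ (![0,0,0,0] : Fin 4 → Fin 2) := by rw [hC]; decide
    have nD : c ≠ (![0,0,0,1] : Fin 4 → Fin 2) := by rw [hC]; decide
    have nG : c ≠ (![0,0,1,1] : Fin 4 → Fin 2) := by rw [hC]; decide
    simp only [if_pos hC, if_neg nA, if_neg nB, if_neg nZ, if_neg nD, if_neg nG]
    ring
  by_cases hD : c = (![0,0,0,1] : Fin 4 → Fin 2)
  · have nA : c ≠ (![1,0,0,0] : Fin 4 → Fin 2) := by rw [hD]; decide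
    have nB : c ≠ (![0,1,0,0] : Fin 4 → Fin 2) := by rw [hD]; decide
    have nZ : c ≠ (![0,0,0,0] : Fin 4 → Fin 2) := by rw [hD]; decide
    have nC : c ≠ (![0,0,1,0] : Fin 4 → Fin 2) := by rw [hD]; decide
    have nG : c ≠ (![0,0,1,1] : Fin 4 → Fin 2) := by rw [hD]; decide
    simp only [if_pos hD, if_neg nA, if_neg nB, if_neg nZ, if_neg nC, if_neg nG]
    ring
  by_cases hG : c = (![0,0,1,1] : Fin 4 → Fin 2)
  · have nA : c ≠ (![1,0,0,0] : Fin 4 → Fin 2) := by rw [hG]; decide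
    have nB : c ≠ (![0,1,0,0] : Fin 4 → Fin 2) := by rw [hG]; decide
    have nZ : c ≠ (![0,0,0,0] : Fin 4 → Fin 2) := by rw [hG]; decide
    have nC : c ≠ (![0,0,1,0] : Fin 4 → Fin 2) := by rw [hG]; decide
    have nD : c ≠ (![0,0,0,1] : Fin 4 → Fin 2) := by rw [hG]; decide
    simp only [if_pos hG, if_neg nA, if_neg nB, if_neg nZ, if_neg nC, if_neg nD]
    ring
  · simp only [if_neg hA, if_neg hB, if_neg hZ, if_neg hC, if_neg hD, if_neg hG]
    ring


/-- there is an edge 2-colored weighted multigraph on 4 vertices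
(red = 0, green = 1) realizing the colorings (g,r,r,r), (r,g,r,r), (r,r,g,r),
(r,r,r,g) with weights 1, 1, 2, i, all other colorings cancelling out. -/
theorem weighted_w_state_graph :
    ∃ G : BCGraph 4 2,
      G.wcol (fun j => if j = 0 then 1 else 0) = 1 ∧
      G.wcol (fun j => if j = 1 then 1 else 0) = 1 ∧
      G.wcol (fun j => if j = 2 then 1 else 0) = 2 ∧
      G.wcol (fun j => if j = 3 then 1 else 0) = Complex.I ∧
      ∀ c : Fin 4 → Fin 2,
        (∀ i : Fin 4, c ≠ fun j => if j = i then 1 else 0) → G.wcol c = 0 := by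
  refine ⟨Gw, ?_, ?_, ?_, ?_, ?_⟩
  · have h : (fun j => if j = (0:Fin 4) then (1:Fin 2) else 0) = ![1,0,0,0] := by
      funext j; fin_cases j <;> rfl
    rw [h, wcol_formula, if_pos rfl, if_neg neAB, if_neg neAC, if_neg neAD]
    ring
  · have h : (fun j => if j = (1:Fin 4) then (1:Fin 2) else 0) = ![0,1,0,0] := by
      funext j; fin_cases j <;> rfl
    rw [h, wcol_formula, if_neg neBA, if_pos rfl, if_neg neBC, if_neg neBD]
    ring
  · have h : (fun j => if j = (2:Fin 4) then (1:Fin 2) else 0) = ![0,0,1,0] := by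
      funext j; fin_cases j <;> rfl
    rw [h, wcol_formula, if_neg neCA, if_neg neCB, if_pos rfl, if_neg neCD]
    ring
  · have h : (fun j => if j = (3:Fin 4) then (1:Fin 2) else 0) = ![0,0,0,1] := by
      funext j; fin_cases j <;> rfl
    rw [h, wcol_formula, if_neg neDA, if_neg neDB, if_neg neDC, if_pos rfl]
    ring
  · intro c h
    have e0 : (fun j => if j = (0:Fin 4) then (1:Fin 2) else 0) = ![1,0,0,0] := by
      funext j; fin_cases j <;> rfl
    have e1 : (fun j => if j = (1:Fin 4) then (1:Fin 2) else 0) = ![0,1,0,0] := by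
      funext j; fin_cases j <;> rfl
    have e2 : (fun j => if j = (2:Fin 4) then (1:Fin 2) else 0) = ![0,0,1,0] := by
      funext j; fin_cases j <;> rfl
    have e3 : (fun j => if j = (3:Fin 4) then (1:Fin 2) else 0) = ![0,0,0,1] := by
      funext j; fin_cases j <;> rfl
    rw [wcol_formula, if_neg (e0 ▸ h 0), if_neg (e1 ▸ h 1), if_neg (e2 ▸ h 2),
      if_neg (e3 ▸ h 3)]
    ring
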